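/- Let G be a connected graph with a dominating clique K and a positive weight function w such that s(G,w) < cs(G,w), and let S be a minimum weighted safe set of (G,w). Then (i) each of the sets S∖K, K∖S, and S∩K is nonempty, and (ii) each component of G[S] is adjacent to at least two components of G−S. -/

import Mathlib

open SimpleGraph
open scoped Classical

variable {V : Type*} [Fintype V]

noncomputable def setWeight (w : V → ℝ) (A : Set V) : ℝ :=
  ∑ v : V, if v ∈ A then w v else 0

def IsComponentOf (G : SimpleGraph V) (S C : Set V) : Prop :=
  ∃ c : (G.induce S).ConnectedComponent,
    C = Subtype.val '' {x : ↥S | (G.induce S).connectedComponentMk x = c}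

def Touches (G : SimpleGraph V) (C D : Set V) : Prop :=
  ∃ a ∈ C, ∃ b ∈ D, G.Adj a b

def IsSafeSet (G : SimpleGraph V) (w : V → ℝ) (S : Set V) : Prop :=
  S.Nonempty ∧ S ≠ Set.univ ∧
    ∀ C D : Set V, IsComponentOf G S C → IsComponentOf G Sᶜ D → Touches G C D →
      setWeight w D ≤ setWeight w C

def IsConnSafeSet (G : SimpleGraph V) (w : V → ℝ) (S : Set V) : Prop :=
  IsSafeSet G w S ∧ (G.induce S).Connected

noncomputable def safeNumber (G : SimpleGraph V) (w : V → ℝ) : ℝ :=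
  sInf (setWeight w '' {S | IsSafeSet G w S})

noncomputable def connSafeNumber (G : SimpleGraph V) (w : V → ℝ) : ℝ :=
  sInf (setWeight w '' {S | IsConnSafeSet G w S})

def InGcs (G : SimpleGraph V) : Prop :=
  ∀ w : V → ℝ, (∀ v, 0 < w v) → safeNumber G w = connSafeNumber G w

/-! Since `s < cs`, a minimum safe set `S` is disconnected, whereas every set contained in the
dominating clique `K` or containing it is connected; hence `S ⊄ K` and `K ⊄ S`.

The rest is one exchange argument. Let `C` be a component of `S` and `D` one of `G - S` such that
every component of `S` is adjacent to `D`, `C` is adjacent to no other component of `G - S`, and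
every other component `E` of `G - S` is adjacent to `S \ C` and weighs at most `w(S \ C)`.
If `w(V \ C) ≤ w(C)`, then `C` is a connected safe set. Otherwise add the other components to
`(S \ C) ∪ D` one at a time: the weight starts at most `w(S)`, grows by at most
`w(S \ C) = w(S) - w(C)` per step and ends at least `w(C)`, so at some stage it lies in
`[w(C), w(S)]`. That set is connected, and its complement splits into `C` and components of weight
at most `w(S \ C)`, so it is safe. Either way some connected safe set weighs at most `s < cs`.

If `S ∩ K = ∅`, then `G - S` is connected and the exchange applies trivially. If a component `C`
of `S` were adjacent to a single component of `G - S`, that one is the component `D ⊇ K \ S`; by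
domination every other component is adjacent to the component of `S` containing `S ∩ K`, which
therefore is not `C`, and the exchange applies again. -/

section

-- `V` without `[Fintype V]`, which only the weight lemmas take
variable {V : Type*}

/-- Note that `ReachIn G A x x` holds even for `x ∉ A`. -/
def ReachIn (G : SimpleGraph V) (A : Set V) : V → V → Prop :=
  Relation.ReflTransGen fun u v => u ∈ A ∧ v ∈ A ∧ G.Adj u v

def PreconnectedIn (G : SimpleGraph V) (A : Set V) : Prop :=
  ∀ x ∈ A, ∀ y ∈ A, ReachIn G A x y

section Reach

variable {G : SimpleGraph V} {A B P : Set V} {x y z : V}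

theorem ReachIn.refl (x : V) : ReachIn G A x x := Relation.ReflTransGen.refl

theorem ReachIn.of_adj (hx : x ∈ A) (hy : y ∈ A) (h : G.Adj x y) : ReachIn G A x y :=
  Relation.ReflTransGen.single ⟨hx, hy, h⟩

theorem ReachIn.trans (h : ReachIn G A x y) (h' : ReachIn G A y z) : ReachIn G A x z :=
  Relation.ReflTransGen.trans h h'

theorem ReachIn.symm (h : ReachIn G A x y) : ReachIn G A y x := by
  induction h with
  | refl => exact .refl _
  | tail _ hbc ih => exact (ReachIn.of_adj hbc.2.1 hbc.1 hbc.2.2.symm).trans ih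

theorem ReachIn.mono (hAB : A ⊆ B) (h : ReachIn G A x y) : ReachIn G B x y :=
  Relation.ReflTransGen.mono (fun _ _ h => ⟨hAB h.1, hAB h.2.1, h.2.2⟩) _ _ h

def IsClosedIn (G : SimpleGraph V) (A P : Set V) : Prop :=
  ∀ ⦃u v⦄, u ∈ P → v ∈ A → G.Adj u v → v ∈ P

theorem ReachIn.mem_of_isClosedIn (hP : IsClosedIn G A P) (hx : x ∈ P)
    (h : ReachIn G A x y) : y ∈ P := by
  induction h with
  | refl => exact hx
  | tail _ hbc ih => exact hP ih hbc.2.1 hbc.2.2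

theorem ReachIn.of_isClosedIn (hP : IsClosedIn G A P) (hx : x ∈ P) (h : ReachIn G A x y) :
    ReachIn G P x y := by
  induction h with
  | refl => exact .refl _
  | tail hxb hbc ih =>
      have hb := ReachIn.mem_of_isClosedIn hP hx hxb
      exact ih.trans (.of_adj hb (hP hb hbc.2.1 hbc.2.2) hbc.2.2)

theorem reachIn_iff_reachable_induce (hx : x ∈ A) (hy : y ∈ A) :
    ReachIn G A x y ↔ (G.induce A).Reachable ⟨x, hx⟩ ⟨y, hy⟩ := by
  constructor
  · intro h
    induction h with
    | refl => exact .rfl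
    | @tail b c _ hbc ih =>
        have hbc' : (G.induce A).Adj ⟨b, hbc.1⟩ ⟨c, hbc.2.1⟩ := hbc.2.2
        exact (ih hbc.1).trans hbc'.reachable
  · have (a b : A) (hab : (G.induce A).Reachable a b) : ReachIn G A a b := by
      obtain ⟨p⟩ := hab
      induction p with
      | nil => exact .refl _
      | cons hab _ ih =>
          exact (ReachIn.of_adj (Subtype.property _) (Subtype.property _) hab).trans ih
    exact this _ _

theorem PreconnectedIn.connected_induce (h : PreconnectedIn G A) (hA : A.Nonempty) :
    (G.induce A).Connected := by
  rw [connected_iff]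
  exact ⟨fun u v => (reachIn_iff_reachable_induce u.2 v.2).mp (h u u.2 v v.2), hA.to_subtype⟩

theorem preconnectedIn_of_isClique {K : Set V} (hK : G.IsClique K) (hKA : K ⊆ A)
    (hdom : ∀ v ∈ A, v ∉ K → ∃ u ∈ K, G.Adj v u) : PreconnectedIn G A := by
  have reach_K : ∀ x ∈ A, ∃ k ∈ K, ReachIn G A x k := by
    intro x hx
    by_cases hxK : x ∈ K
    · exact ⟨x, hxK, .refl x⟩
    · obtain ⟨k, hk, hxk⟩ := hdom x hx hxK
      exact ⟨k, hk, .of_adj hx (hKA hk) hxk⟩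
  have reach_KK : ∀ k ∈ K, ∀ l ∈ K, ReachIn G A k l := by
    intro k hk l hl
    rcases eq_or_ne k l with rfl | hkl
    · exact .refl k
    · exact .of_adj (hKA hk) (hKA hl) (hK hk hl hkl)
  intro x hx y hy
  obtain ⟨k, hk, hxk⟩ := reach_K x hx
  obtain ⟨l, hl, hyl⟩ := reach_K y hy
  exact (hxk.trans (reach_KK k hk l hl)).trans hyl.symm

end Reach

section Component

variable {G : SimpleGraph V} {A C X P : Set V} {x u v : V}

theorem isComponentOf_iff :
    IsComponentOf G A C ↔ ∃ x ∈ A, C = {y | y ∈ A ∧ ReachIn G A x y} := by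
  constructor
  · rintro ⟨c, rfl⟩
    obtain ⟨x, rfl⟩ := c.exists_rep
    refine ⟨x, x.2, Set.ext fun y => ⟨?_, fun ⟨hy, hxy⟩ => ⟨⟨y, hy⟩, ?_, rfl⟩⟩⟩
    · rintro ⟨y, hy, rfl⟩
      exact ⟨y.2, (reachIn_iff_reachable_induce _ _).mpr (ConnectedComponent.exact hy).symm⟩
    · exact ConnectedComponent.sound ((reachIn_iff_reachable_induce _ _).mp hxy).symm
  · rintro ⟨x, hx, rfl⟩
    refine ⟨(G.induce A).connectedComponentMk ⟨x, hx⟩, Set.ext fun y => ⟨?_, ?_⟩⟩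
    · rintro ⟨hy, hxy⟩
      exact ⟨⟨y, hy⟩,
        ConnectedComponent.sound ((reachIn_iff_reachable_induce _ _).mp hxy).symm, rfl⟩
    · rintro ⟨y, hy, rfl⟩
      exact ⟨y.2, (reachIn_iff_reachable_induce _ _).mpr (ConnectedComponent.exact hy).symm⟩

theorem exists_isComponentOf_mem (hx : x ∈ A) : ∃ C, IsComponentOf G A C ∧ x ∈ C :=
  ⟨_, isComponentOf_iff.mpr ⟨x, hx, rfl⟩, hx, .refl x⟩

namespace IsComponentOf

theorem subset (h : IsComponentOf G A C) : C ⊆ A := by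
  obtain ⟨x, -, rfl⟩ := isComponentOf_iff.mp h
  exact fun _ hy => hy.1

theorem nonempty (h : IsComponentOf G A C) : C.Nonempty := by
  obtain ⟨x, hx, rfl⟩ := isComponentOf_iff.mp h
  exact ⟨x, hx, .refl x⟩

theorem isClosedIn (h : IsComponentOf G A C) : IsClosedIn G A C := by
  obtain ⟨x, -, rfl⟩ := isComponentOf_iff.mp h
  exact fun _ v hu hv huv => ⟨hv, hu.2.trans (.of_adj hu.1 hv huv)⟩

theorem preconnectedIn (h : IsComponentOf G A C) : PreconnectedIn G C := by
  obtain ⟨a, -, hC⟩ := isComponentOf_iff.mp h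
  intro x hx y hy
  have hxy : ReachIn G A x y := by
    rw [hC] at hx hy
    exact hx.2.symm.trans hy.2
  exact hxy.of_isClosedIn h.isClosedIn hx

theorem subset_of_isClosedIn (h : IsComponentOf G A X) (hx : x ∈ X) (hxP : x ∈ P)
    (hP : IsClosedIn G A P) : X ⊆ P := fun y hy =>
  ((h.preconnectedIn x hx y hy).mono h.subset).mem_of_isClosedIn hP hxP

theorem eq_of_mem (h : IsComponentOf G A C) (h' : IsComponentOf G A X) (hxC : x ∈ C)
    (hxX : x ∈ X) : C = X :=
  (h.subset_of_isClosedIn hxC hxX h'.isClosedIn).antisymm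
    (h'.subset_of_isClosedIn hxX hxC h.isClosedIn)

theorem eq_of_preconnectedIn (h : IsComponentOf G A C) (hA : PreconnectedIn G A) : C = A := by
  obtain ⟨x, hx, rfl⟩ := isComponentOf_iff.mp h
  exact Set.ext fun y => ⟨fun hy => hy.1, fun hy => ⟨hy, hA x hx y hy⟩⟩

theorem inter_subset_of_isClique {K : Set V} (h : IsComponentOf G A C) (hK : G.IsClique K)
    (hxC : x ∈ C) (hxK : x ∈ K) : K ∩ A ⊆ C := by
  rintro y ⟨hyK, hyA⟩
  rcases eq_or_ne x y with rfl | hxy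
  · exact hxC
  · exact h.isClosedIn hxC hyA (hK hxK hyK hxy)

theorem touches_compl (h : IsComponentOf G A C) (hG : G.Connected) (hA : A ≠ Set.univ) :
    Touches G C Aᶜ := by
  obtain ⟨x, hx⟩ := h.nonempty
  obtain ⟨z, hz⟩ := Set.ne_univ_iff_exists_notMem A |>.mp hA
  obtain ⟨d, -, hd₁, hd₂⟩ := (hG.preconnected x z).some.exists_boundary_dart C hx
    fun hzC => hz (h.subset hzC)
  exact ⟨d.fst, hd₁, d.snd, fun hA' => hd₂ (h.isClosedIn hd₁ hA' d.adj), d.adj⟩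

end IsComponentOf

theorem isComponentOf_self (hA : PreconnectedIn G A) (hne : A.Nonempty) : IsComponentOf G A A := by
  obtain ⟨x, hx⟩ := hne
  obtain ⟨C, hC, -⟩ := exists_isComponentOf_mem (G := G) hx
  exact hC.eq_of_preconnectedIn hA ▸ hC

end Component

section Weight

variable [Fintype V] {w : V → ℝ} {A B : Set V}

theorem setWeight_union_add_inter (w : V → ℝ) (A B : Set V) :
    setWeight w (A ∪ B) + setWeight w (A ∩ B) = setWeight w A + setWeight w B := by
  simp only [setWeight, ← Set.indicator_apply, ← Finset.sum_add_distrib,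
    Set.indicator_union_add_inter_apply]

theorem setWeight_nonneg (hw : ∀ v, 0 ≤ w v) (A : Set V) : 0 ≤ setWeight w A :=
  Finset.sum_nonneg fun v _ => by split_ifs <;> simp [hw v]

theorem setWeight_union_le (hw : ∀ v, 0 ≤ w v) (A B : Set V) :
    setWeight w (A ∪ B) ≤ setWeight w A + setWeight w B := by
  linarith [setWeight_union_add_inter w A B, setWeight_nonneg hw (A ∩ B)]

theorem setWeight_union_of_disjoint (h : Disjoint A B) :
    setWeight w (A ∪ B) = setWeight w A + setWeight w B := by
  have := setWeight_union_add_inter w A B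
  rwa [h.inter_eq, show setWeight w ∅ = 0 by simp [setWeight], add_zero] at this

theorem setWeight_diff_add (h : A ⊆ B) :
    setWeight w (B \ A) + setWeight w A = setWeight w B := by
  rw [← setWeight_union_of_disjoint Set.disjoint_sdiff_left, Set.sdiff_union_of_subset h]

theorem setWeight_mono (hw : ∀ v, 0 ≤ w v) (h : A ⊆ B) : setWeight w A ≤ setWeight w B := by
  linarith [setWeight_diff_add (w := w) h, setWeight_nonneg hw (B \ A)]

end Weight

theorem Finset.exists_subset_mem_Icc {ι : Type*} [DecidableEq ι] (f : Finset ι → ℝ) {a b : ℝ}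
    (F : Finset ι) (h₀ : f ∅ ≤ b) (hF : a ≤ f F)
    (hstep : ∀ B ⊆ F, ∀ i ∈ F, f (insert i B) ≤ f B + (b - a)) :
    ∃ B ⊆ F, f B ∈ Set.Icc a b := by
  induction F using Finset.induction_on with
  | empty => exact ⟨∅, subset_rfl, hF, h₀⟩
  | insert i F _ ih =>
      by_cases hFa : a ≤ f F
      · obtain ⟨B, hBF, hB⟩ := ih hFa fun B hB j hj =>
          hstep B (hB.trans (subset_insert i F)) j (mem_insert_of_mem hj)
        exact ⟨B, hBF.trans (subset_insert i F), hB⟩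
      · refine ⟨insert i F, subset_rfl, hF, ?_⟩
        linarith [hstep F (subset_insert i F) i (mem_insert_self i F)]

section SafeSet

variable [Fintype V] {G : SimpleGraph V} {w : V → ℝ} {T : Set V}

theorem connSafeNumber_le (hT : IsConnSafeSet G w T) : connSafeNumber G w ≤ setWeight w T :=
  csInf_le (Set.toFinite _).bddBelow ⟨T, hT, rfl⟩

theorem isConnSafeSet_of_preconnectedIn (hne : T.Nonempty) (hT : T ≠ Set.univ)
    (hpre : PreconnectedIn G T)
    (hcomp : ∀ X, IsComponentOf G Tᶜ X → setWeight w X ≤ setWeight w T) : IsConnSafeSet G w T :=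
  ⟨⟨hne, hT, fun _ X hC hX _ => hC.eq_of_preconnectedIn hpre ▸ hcomp X hX⟩,
    hpre.connected_induce hne⟩

end SafeSet

/-- The candidate connected safe set of the exchange argument: the component `C` of `S` is
traded for the components `D` and `E ∈ B` of `Sᶜ`. -/
def exchangeSet (S C D : Set V) (B : Finset (Set V)) : Set V := S \ C ∪ D ∪ ⋃ E ∈ B, E

section Exchange

variable {G : SimpleGraph V} {S C D : Set V} {B : Finset (Set V)}

theorem exchangeSet_empty : exchangeSet S C D ∅ = S \ C ∪ D := by
  simp [exchangeSet]

theorem exchangeSet_insert [DecidableEq (Set V)] (E : Set V) (B : Finset (Set V)) :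
    exchangeSet S C D (insert E B) = exchangeSet S C D B ∪ E := by
  simp only [exchangeSet, Finset.set_biUnion_insert]
  ac_rfl

theorem exchangeSet_subset_compl (hC : C ⊆ S) (hD : D ⊆ Sᶜ) (hB : ∀ E ∈ B, E ⊆ Sᶜ) :
    exchangeSet S C D B ⊆ Cᶜ := by
  rintro x ((hx | hx) | hx) hxC
  · exact hx.2 hxC
  · exact hD hx (hC hxC)
  · obtain ⟨E, hE, hxE⟩ := Set.mem_iUnion₂.mp hx
    exact hB E hE hxE (hC hxC)

theorem exists_reachIn_of_mem_diff (hC : IsComponentOf G S C)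
    (htouch : ∀ C', IsComponentOf G S C' → Touches G C' D) {p : V} (hp : p ∈ S \ C) :
    ∃ d ∈ D, ReachIn G (S \ C ∪ D) p d := by
  obtain ⟨Cp, hCp, hpCp⟩ := exists_isComponentOf_mem hp.1
  have hCpC : Cp ⊆ S \ C := fun q hq =>
    ⟨hCp.subset hq, fun hqC => hp.2 (hCp.eq_of_mem hC hq hqC ▸ hpCp)⟩
  obtain ⟨a, ha, d, hd, had⟩ := htouch Cp hCp
  exact ⟨d, hd, ((hCp.preconnectedIn p hpCp a ha).mono (hCpC.trans Set.subset_union_left)).trans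
    (.of_adj (Or.inl (hCpC ha)) (Or.inr hd) had)⟩

theorem preconnectedIn_exchangeSet (hC : IsComponentOf G S C) (hD : IsComponentOf G Sᶜ D)
    (htouch : ∀ C', IsComponentOf G S C' → Touches G C' D)
    (hB : ∀ E ∈ B, IsComponentOf G Sᶜ E ∧ Touches G (S \ C) E) :
    PreconnectedIn G (exchangeSet S C D B) := by
  have hsub : S \ C ∪ D ⊆ exchangeSet S C D B := Set.subset_union_left
  have reach_D : ∀ p ∈ exchangeSet S C D B, ∃ d ∈ D, ReachIn G (exchangeSet S C D B) p d := by
    rintro p ((hp | hp) | hp)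
    · obtain ⟨d, hd, hpd⟩ := exists_reachIn_of_mem_diff hC htouch hp
      exact ⟨d, hd, hpd.mono hsub⟩
    · exact ⟨p, hp, .refl p⟩
    · obtain ⟨E, hEB, hpE⟩ := Set.mem_iUnion₂.mp hp
      obtain ⟨hE, a, ha, b, hb, hab⟩ := hB E hEB
      have hET : E ⊆ exchangeSet S C D B := fun q hq => Or.inr (Set.mem_biUnion hEB hq)
      obtain ⟨d, hd, had⟩ := exists_reachIn_of_mem_diff hC htouch ha
      exact ⟨d, hd, ((hE.preconnectedIn p hpE b hb).mono hET).trans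
        ((ReachIn.of_adj (hET hb) (hsub (Or.inl ha)) hab.symm).trans (had.mono hsub))⟩
  intro x hx y hy
  obtain ⟨d, hd, hxd⟩ := reach_D x hx
  obtain ⟨d', hd', hyd'⟩ := reach_D y hy
  exact (hxd.trans ((hD.preconnectedIn d hd d' hd').mono
    (Set.subset_union_right.trans hsub))).trans hyd'.symm

theorem isClosedIn_compl_exchangeSet_of_component (hD : D ⊆ Sᶜ)
    (honly : ∀ E, IsComponentOf G Sᶜ E → Touches G C E → E = D) :
    IsClosedIn G (exchangeSet S C D B)ᶜ C := by
  intro u v hu hvT huv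
  by_cases hvS : v ∈ S
  · by_contra hvC
    exact hvT (Or.inl (Or.inl ⟨hvS, hvC⟩))
  · obtain ⟨E, hE, hvE⟩ := exists_isComponentOf_mem (G := G) (show v ∈ Sᶜ from hvS)
    obtain rfl := honly E hE ⟨u, hu, v, hvE, huv⟩
    exact absurd (Or.inl (Or.inr hvE)) hvT

theorem isClosedIn_compl_exchangeSet_of_ne {E : Set V} (hE : IsComponentOf G Sᶜ E) (hED : E ≠ D)
    (honly : ∀ E, IsComponentOf G Sᶜ E → Touches G C E → E = D) :
    IsClosedIn G (exchangeSet S C D B)ᶜ E := by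
  intro u v hu hvT huv
  by_cases hvS : v ∈ S
  · have hvC : v ∈ C := by
      by_contra hvC
      exact hvT (Or.inl (Or.inl ⟨hvS, hvC⟩))
    exact absurd (honly E hE ⟨v, hvC, u, hu, huv.symm⟩) hED
  · exact hE.isClosedIn hu hvS huv

theorem setWeight_le_of_isComponentOf_compl_exchangeSet [Fintype V] {w : V → ℝ}
    (hw : ∀ v, 0 ≤ w v) (hD : D ⊆ Sᶜ)
    (honly : ∀ E, IsComponentOf G Sᶜ E → Touches G C E → E = D)
    (hother : ∀ E, IsComponentOf G Sᶜ E → E ≠ D → setWeight w E ≤ setWeight w (S \ C))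
    (hCT : setWeight w C ≤ setWeight w (exchangeSet S C D B)) {X : Set V}
    (hX : IsComponentOf G (exchangeSet S C D B)ᶜ X) :
    setWeight w X ≤ setWeight w (exchangeSet S C D B) := by
  obtain ⟨x, hx⟩ := hX.nonempty
  have hxT := hX.subset hx
  by_cases hxC : x ∈ C
  · calc setWeight w X
        ≤ setWeight w C := setWeight_mono hw <| hX.subset_of_isClosedIn hx hxC
          (isClosedIn_compl_exchangeSet_of_component hD honly)
      _ ≤ _ := hCT
  · have hxS : x ∉ S := fun hxS => hxT (Or.inl (Or.inl ⟨hxS, hxC⟩))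
    obtain ⟨E, hE, hxE⟩ := exists_isComponentOf_mem (G := G) (show x ∈ Sᶜ from hxS)
    have hED : E ≠ D := by
      rintro rfl
      exact hxT (Or.inl (Or.inr hxE))
    calc setWeight w X
        ≤ setWeight w E := setWeight_mono hw <| hX.subset_of_isClosedIn hx hxE
          (isClosedIn_compl_exchangeSet_of_ne hE hED honly)
      _ ≤ setWeight w (S \ C) := hother E hE hED
      _ ≤ _ := setWeight_mono hw (Set.subset_union_left.trans Set.subset_union_left)

end Exchange

theorem IsSafeSet.exists_isConnSafeSet_le [Fintype V] {G : SimpleGraph V} {w : V → ℝ}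
    {S C D : Set V} (hw : ∀ v, 0 ≤ w v) (hS : IsSafeSet G w S) (hC : IsComponentOf G S C)
    (hD : IsComponentOf G Sᶜ D) (htouch : ∀ C', IsComponentOf G S C' → Touches G C' D)
    (honly : ∀ E, IsComponentOf G Sᶜ E → Touches G C E → E = D)
    (hother : ∀ E, IsComponentOf G Sᶜ E → E ≠ D →
      Touches G (S \ C) E ∧ setWeight w E ≤ setWeight w (S \ C)) :
    ∃ T, IsConnSafeSet G w T ∧ setWeight w T ≤ setWeight w S := by
  have hCS := setWeight_diff_add (w := w) hC.subset
  have hDC : setWeight w D ≤ setWeight w C := hS.2.2 C D hC hD (htouch C hC)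
  obtain ⟨d, hd⟩ := hD.nonempty
  obtain ⟨c, hc⟩ := hC.nonempty
  by_cases hCc : setWeight w Cᶜ ≤ setWeight w C
  · refine ⟨C, isConnSafeSet_of_preconnectedIn hC.nonempty ?_ hC.preconnectedIn
      fun X hX => (setWeight_mono hw hX.subset).trans hCc, setWeight_mono hw hC.subset⟩
    exact fun hCu => hD.subset hd (hC.subset (hCu ▸ Set.mem_univ d))
  let F := Finset.univ.filter fun E => IsComponentOf G Sᶜ E ∧ E ≠ D
  have hF : ∀ E ∈ F, IsComponentOf G Sᶜ E ∧ E ≠ D := fun E hE => (Finset.mem_filter.mp hE).2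
  have hCcF : Cᶜ ⊆ exchangeSet S C D F := by
    intro x hxC
    by_cases hxS : x ∈ S
    · exact Or.inl (Or.inl ⟨hxS, hxC⟩)
    obtain ⟨E, hE, hxE⟩ := exists_isComponentOf_mem (G := G) (show x ∈ Sᶜ from hxS)
    by_cases hED : E = D
    · exact Or.inl (Or.inr (hED ▸ hxE))
    · exact Or.inr (Set.mem_biUnion (Finset.mem_filter.mpr ⟨Finset.mem_univ _, hE, hED⟩) hxE)
  obtain ⟨B, hBF, hCB, hBS⟩ := Finset.exists_subset_mem_Icc
    (fun B => setWeight w (exchangeSet S C D B)) F (a := setWeight w C) (b := setWeight w S)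
    (by rw [exchangeSet_empty]; linarith [setWeight_union_le hw (S \ C) D])
    ((le_of_not_ge hCc).trans (setWeight_mono hw hCcF))
    (fun B _ E hE => by
      rw [exchangeSet_insert]
      linarith [setWeight_union_le hw (exchangeSet S C D B) E,
        (hother E (hF E hE).1 (hF E hE).2).2])
  have hBT : exchangeSet S C D B ⊆ Cᶜ :=
    exchangeSet_subset_compl hC.subset hD.subset fun E hE => (hF E (hBF hE)).1.subset
  refine ⟨exchangeSet S C D B, isConnSafeSet_of_preconnectedIn ⟨d, Or.inl (Or.inr hd)⟩
    (fun hBu => hBT (hBu ▸ Set.mem_univ c) hc) ?_ ?_, hBS⟩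
  · exact preconnectedIn_exchangeSet hC hD htouch fun E hE =>
      ⟨(hF E (hBF hE)).1, (hother E (hF E (hBF hE)).1 (hF E (hBF hE)).2).1⟩
  · exact fun X hX => setWeight_le_of_isComponentOf_compl_exchangeSet hw hD.subset honly
      (fun E hE hED => (hother E hE hED).2) hCB hX

section DominatingClique

variable {G : SimpleGraph V} {K S D : Set V}

theorem IsComponentOf.touches_of_isClique (hK : G.IsClique K)
    (hdom : ∀ v ∉ K, ∃ u ∈ K, G.Adj v u) (hKD : K \ S ⊆ D) {k : V} (hk : k ∈ K \ S) {C : Set V}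
    (hC : IsComponentOf G S C) : Touches G C D := by
  obtain ⟨x, hx⟩ := hC.nonempty
  have hxS := hC.subset hx
  by_cases hxK : x ∈ K
  · exact ⟨x, hx, k, hKD hk, hK hxK hk.1 fun h => hk.2 (h ▸ hxS)⟩
  obtain ⟨u, huK, hxu⟩ := hdom x hxK
  by_cases huS : u ∈ S
  · exact ⟨u, hC.isClosedIn hx huS hxu, k, hKD hk, hK huK hk.1 fun h => hk.2 (h ▸ huS)⟩
  · exact ⟨x, hx, u, hKD ⟨huK, huS⟩, hxu⟩

theorem IsComponentOf.exists_adj_of_ne (hdom : ∀ v ∉ K, ∃ u ∈ K, G.Adj v u) {E : Set V}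
    (hE : IsComponentOf G Sᶜ E) (hD : IsComponentOf G Sᶜ D) (hKD : K \ S ⊆ D) (hED : E ≠ D) :
    ∃ u ∈ K ∩ S, ∃ x ∈ E, G.Adj u x := by
  obtain ⟨x, hx⟩ := hE.nonempty
  have hxS : x ∉ S := hE.subset hx
  have hxK : x ∉ K := fun hxK => hED (hE.eq_of_mem hD hx (hKD ⟨hxK, hxS⟩))
  obtain ⟨u, huK, hxu⟩ := hdom x hxK
  by_cases huS : u ∈ S
  · exact ⟨u, ⟨huK, huS⟩, x, hx, hxu.symm⟩
  · exact absurd (hE.eq_of_mem hD (hE.isClosedIn hx huS hxu) (hKD ⟨huK, huS⟩)) hED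

end DominatingClique

section LightSafeSet

variable [Fintype V] {G : SimpleGraph V} {w : V → ℝ} {K S : Set V}

theorem IsSafeSet.not_preconnectedIn (hS : IsSafeSet G w S)
    (hlight : ∀ T, IsConnSafeSet G w T → setWeight w S < setWeight w T) :
    ¬ PreconnectedIn G S :=
  fun h => (hlight S ⟨hS, h.connected_induce hS.1⟩).false

theorem IsSafeSet.inter_nonempty_of_isClique (hG : G.Connected) (hK : G.IsClique K)
    (hdom : ∀ v ∉ K, ∃ u ∈ K, G.Adj v u) (hw : ∀ v, 0 ≤ w v) (hS : IsSafeSet G w S)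
    (hlight : ∀ T, IsConnSafeSet G w T → setWeight w S < setWeight w T) :
    (S ∩ K).Nonempty := by
  by_contra! hSK
  have hpre : PreconnectedIn G Sᶜ :=
    preconnectedIn_of_isClique hK (fun k hk hkS => hSK.subset ⟨hkS, hk⟩) fun v _ hv => hdom v hv
  obtain ⟨C, hC, -⟩ := exists_isComponentOf_mem (G := G) hS.1.some_mem
  obtain ⟨T, hT, hTS⟩ := hS.exists_isConnSafeSet_le hw hC
    (isComponentOf_self hpre (Set.nonempty_compl.mpr hS.2.1))
    (fun C' hC' => hC'.touches_compl hG hS.2.1) (fun E hE _ => hE.eq_of_preconnectedIn hpre)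
    fun E hE hE' => absurd (hE.eq_of_preconnectedIn hpre) hE'
  exact (hlight T hT).not_ge hTS

theorem IsSafeSet.exists_touches_ne_of_isClique (hK : G.IsClique K)
    (hdom : ∀ v ∉ K, ∃ u ∈ K, G.Adj v u) (hw : ∀ v, 0 ≤ w v) (hS : IsSafeSet G w S)
    (hlight : ∀ T, IsConnSafeSet G w T → setWeight w S < setWeight w T)
    (hKS : (K \ S).Nonempty) (hSK : (S ∩ K).Nonempty) {C : Set V} (hC : IsComponentOf G S C) :
    ∃ D₁ D₂ : Set V, IsComponentOf G Sᶜ D₁ ∧ IsComponentOf G Sᶜ D₂ ∧ D₁ ≠ D₂ ∧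
      Touches G C D₁ ∧ Touches G C D₂ := by
  obtain ⟨k, hk⟩ := hKS
  obtain ⟨D, hD, hkD⟩ := exists_isComponentOf_mem (G := G) (show k ∈ Sᶜ from hk.2)
  have hKD : K \ S ⊆ D := hD.inter_subset_of_isClique hK hkD hk.1
  obtain ⟨u₀, hu₀S, hu₀K⟩ := hSK
  obtain ⟨CK, hCK, hu₀CK⟩ := exists_isComponentOf_mem (G := G) hu₀S
  have hKCK : K ∩ S ⊆ CK := hCK.inter_subset_of_isClique hK hu₀CK hu₀K
  have htouch : ∀ C', IsComponentOf G S C' → Touches G C' D :=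
    fun C' hC' => hC'.touches_of_isClique hK hdom hKD hk
  by_contra! hone
  have honly : ∀ E, IsComponentOf G Sᶜ E → Touches G C E → E = D := fun E hE hCE => by
    by_contra hED
    exact hone E D hE hD hED hCE (htouch C hC)
  obtain ⟨T, hT, hTS⟩ := hS.exists_isConnSafeSet_le hw hC hD htouch honly fun E hE hED => by
    obtain ⟨u, hu, x, hx, hux⟩ := hE.exists_adj_of_ne hdom hD hKD hED
    have hCK_touch : Touches G CK E := ⟨u, hKCK hu, x, hx, hux⟩
    -- `C` touches only `D`, so the component `CK` touching `E` is not `C`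
    have hCKC : CK ⊆ S \ C := fun y hy =>
      ⟨hCK.subset hy, fun hyC => hED (honly E hE (hC.eq_of_mem hCK hyC hy ▸ hCK_touch))⟩
    exact ⟨⟨u, hCKC (hKCK hu), x, hx, hux⟩,
      (hS.2.2 CK E hCK hE hCK_touch).trans (setWeight_mono hw hCKC)⟩
  exact (hlight T hT).not_ge hTS

end LightSafeSet

end

theorem stmt_13 (G : SimpleGraph V) (hG : G.Connected) (K : Set V)
    (hK : G.IsClique K) (hdom : ∀ v ∉ K, ∃ u ∈ K, G.Adj v u)
    (w : V → ℝ) (hw : ∀ v, 0 < w v)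
    (hlt : safeNumber G w < connSafeNumber G w) (S : Set V)
    (hS : IsSafeSet G w S) (hmin : setWeight w S = safeNumber G w) :
    ((S \ K).Nonempty ∧ (K \ S).Nonempty ∧ (S ∩ K).Nonempty) ∧
    (∀ C : Set V, IsComponentOf G S C →
      ∃ D₁ D₂ : Set V, IsComponentOf G Sᶜ D₁ ∧ IsComponentOf G Sᶜ D₂ ∧ D₁ ≠ D₂ ∧
        Touches G C D₁ ∧ Touches G C D₂) := by
  have hw₀ : ∀ v, 0 ≤ w v := fun v => (hw v).le
  have hlight : ∀ T, IsConnSafeSet G w T → setWeight w S < setWeight w T :=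
    fun T hT => hmin ▸ hlt.trans_le (connSafeNumber_le hT)
  have hdisc := hS.not_preconnectedIn hlight
  have hSdiff : (S \ K).Nonempty := by
    by_contra! h
    exact hdisc <| preconnectedIn_of_isClique (hK.subset (Set.sdiff_eq_empty.mp h)) subset_rfl
      fun _ hv hv' => absurd hv hv'
  have hKdiff : (K \ S).Nonempty := by
    by_contra! h
    exact hdisc <| preconnectedIn_of_isClique hK (Set.sdiff_eq_empty.mp h) fun v _ hv => hdom v hv
  have hinter := hS.inter_nonempty_of_isClique hG hK hdom hw₀ hlight
  exact ⟨⟨hSdiff, hKdiff, hinter⟩,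
    fun C hC => hS.exists_touches_ne_of_isClique hK hdom hw₀ hlight hKdiff hinter hC⟩
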